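/- arXiv:1008.1350 — 2 statements merged into one kernel-verified Lean document; each statement's English description precedes it below -/
import Mathlib

section
/- Let X_0, X_1, ... be a stationary process, p ∈ ℕ, and (u_n) a sequence of levels. Suppose the summable periodicity condition holds: ∑_{i=0}^{[(n-1)/p]} P(X_0>u_n, X_p>u_n, ..., X_{ip}>u_n) → 0 as n → ∞. Then P(𝒬_{p,0,n}(u_n)) − P(M_n ≤ u_n) → 0 as n → ∞, where M_n = max{X_0,...,X_{n-1}} and 𝒬_{p,0,n}(u_n) is the event of no escapes in times 0,...,n-1. -/
open MeasureTheory Finset Filter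

/-- Under the summable periodicity condition
`∑_{i=0}^{[(n-1)/p]} P(X_0>u_n, X_p>u_n, …, X_{ip}>u_n) → 0`,
one has `P(𝒬_{p,0,n}(u_n)) − P(M_n ≤ u_n) → 0`, where `M_n = max{X_0,…,X_{n-1}}`
and `𝒬_{p,0,n}(u_n)` is the event of no escapes at times `0,…,n-1`. -/
theorem stmt2 {Ω : Type*} [MeasurableSpace Ω] (μ : Measure Ω) [IsProbabilityMeasure μ]
    (X : ℕ → Ω → ℝ) (hX : ∀ i, Measurable (X i))
    (hstat : ∀ (k : ℕ) (B : Set (ℕ → ℝ)), MeasurableSet B →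
      μ {ω | (fun i => X (i + k) ω) ∈ B} = μ {ω | (fun i => X i ω) ∈ B})
    (p : ℕ) (hp : 0 < p) (u : ℕ → ℝ)
    (hSP : Tendsto (fun n => ∑ i ∈ Finset.range ((n - 1) / p + 1),
        (μ (⋂ j ∈ Finset.range (i + 1), {ω | u n < X (j * p) ω})).toReal) atTop (nhds 0)) :
    Tendsto (fun n =>
        (μ (⋂ i ∈ Finset.range n, {ω | u n < X i ω ∧ X (i + p) ω ≤ u n}ᶜ)).toReal -
        (μ {ω | ∀ i < n, X i ω ≤ u n}).toReal) atTop (nhds 0) := by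
  classical
  set Qc : ℕ → Set Ω := fun n =>
    ⋂ i ∈ Finset.range n, {ω | u n < X i ω ∧ X (i + p) ω ≤ u n}ᶜ with hQc
  set Ms : ℕ → Set Ω := fun n => {ω | ∀ i < n, X i ω ≤ u n} with hMs
  set C : ℕ → ℕ → Set Ω := fun n s =>
    ⋂ j ∈ Finset.range (s + 1), {ω | u n < X (j * p) ω} with hC
  set D : ℕ → ℕ → Set Ω := fun n i =>
    ⋂ j ∈ Finset.range ((n - 1 - i) / p + 1), {ω | u n < X (i + j * p) ω} with hD
  -- measurability of Ms
  have hMsMeas : ∀ n, MeasurableSet (Ms n) := by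
    intro n
    have h : Ms n = ⋂ i ∈ Finset.range n, {ω | X i ω ≤ u n} := by
      ext ω; simp [hMs]
    rw [h]
    exact MeasurableSet.biInter (Finset.range n).countable_toSet
      (fun i _ => measurableSet_le (hX i) measurable_const)
  -- Ms ⊆ Qc
  have hsub : ∀ n, Ms n ⊆ Qc n := by
    intro n ω hω
    simp only [hQc, Set.mem_iInter, Set.mem_compl_iff, Set.mem_setOf_eq,
      Finset.mem_range]
    intro i hi h
    exact absurd (hω i hi) (not_le.mpr h.1)
  -- difference inclusion
  have hincl : ∀ n, Qc n \ Ms n ⊆ ⋃ i ∈ Finset.range n, D n i := by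
    intro n ω hω
    obtain ⟨hQ, hM⟩ := hω
    simp only [hMs, Set.mem_setOf_eq, not_forall, not_le] at hM
    obtain ⟨i, hi, hXi⟩ := hM
    simp only [hQc, Set.mem_iInter, Set.mem_compl_iff, Set.mem_setOf_eq,
      Finset.mem_range] at hQ
    have key : ∀ j, j ≤ (n - 1 - i) / p → u n < X (i + j * p) ω := by
      intro j
      induction j with
      | zero => intro _; simpa using hXi
      | succ j ih =>
        intro hj
        have hj' : j ≤ (n - 1 - i) / p := le_of_lt (Nat.lt_of_succ_le hj)
        have h1 : (j + 1) * p ≤ n - 1 - i := (Nat.le_div_iff_mul_le hp).mp hj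
        have hmul : (j + 1) * p = j * p + p := by ring
        have hlt : i + j * p < n := by omega
        have hib := ih hj'
        have h2 : ¬ X (i + j * p + p) ω ≤ u n := fun h => hQ (i + j * p) hlt ⟨hib, h⟩
        have h3 : u n < X (i + j * p + p) ω := not_le.mp h2
        have harr : i + j * p + p = i + (j + 1) * p := by ring
        rwa [harr] at h3
    simp only [Set.mem_iUnion, Finset.mem_range]
    refine ⟨i, hi, ?_⟩
    simp only [hD, Set.mem_iInter, Set.mem_setOf_eq, Finset.mem_range]
    intro j hj
    exact key j (Nat.lt_succ_iff.mp hj)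
  -- stationarity: μ (D n i) = μ (C n ((n-1-i)/p))
  have hstatD : ∀ n i, μ (D n i) = μ (C n ((n - 1 - i) / p)) := by
    intro n i
    set s := (n - 1 - i) / p with hs
    set B : Set (ℕ → ℝ) := ⋂ j ∈ Finset.range (s + 1), {f : ℕ → ℝ | u n < f (j * p)}
      with hB
    have hBmeas : MeasurableSet B := by
      refine MeasurableSet.biInter (Finset.range (s + 1)).countable_toSet
        (fun j _ => ?_)
      exact measurable_pi_apply (j * p) measurableSet_Ioi
    have h := hstat i B hBmeas
    have e1 : {ω | (fun m => X (m + i) ω) ∈ B} = D n i := by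
      ext ω
      simp only [hB, hD, Set.mem_iInter, Set.mem_setOf_eq]
      constructor
      · intro h j hj; have := h j hj; rwa [add_comm] at this
      · intro h j hj; have := h j hj; rwa [add_comm] at this
    have e2 : {ω | (fun m => X m ω) ∈ B} = C n s := by
      ext ω
      simp [hB, hC, Set.mem_iInter, Set.mem_setOf_eq]
    rw [e1, e2] at h
    exact h
  -- the counting identity
  have haux : ∀ n K, ∑ m ∈ Finset.range (K * p), (μ (C n (m / p))).toReal
      = (p : ℝ) * ∑ s ∈ Finset.range K, (μ (C n s)).toReal := by
    intro n K
    induction K with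
    | zero => simp
    | succ K ih =>
      have hKp : (K + 1) * p = K * p + p := by ring
      rw [hKp, Finset.sum_range_add, ih]
      have hterm : ∀ r ∈ Finset.range p,
          (μ (C n ((K * p + r) / p))).toReal = (μ (C n K)).toReal := by
        intro r hr
        rw [Finset.mem_range] at hr
        have : (K * p + r) / p = K := by
          rw [Nat.mul_comm, Nat.mul_add_div hp, Nat.div_eq_of_lt hr, Nat.add_zero]
        rw [this]
      rw [Finset.sum_congr rfl hterm, Finset.sum_const, Finset.card_range,
        Finset.sum_range_succ, nsmul_eq_mul, mul_add]
  -- main bound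
  have hbound : ∀ n, (μ (Qc n)).toReal - (μ (Ms n)).toReal ≤
      (p : ℝ) * ∑ i ∈ Finset.range ((n - 1) / p + 1),
        (μ (⋂ j ∈ Finset.range (i + 1), {ω | u n < X (j * p) ω})).toReal := by
    intro n
    set K := (n - 1) / p + 1 with hK
    have hdiffeq : μ (Qc n \ Ms n) = μ (Qc n) - μ (Ms n) :=
      measure_diff (hsub n) (hMsMeas n).nullMeasurableSet (measure_ne_top μ _)
    have hstep1 : (μ (Qc n)).toReal - (μ (Ms n)).toReal = (μ (Qc n \ Ms n)).toReal := by
      rw [hdiffeq, ENNReal.toReal_sub_of_le (measure_mono (hsub n)) (measure_ne_top μ _)]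
    rw [hstep1]
    have hstep2 : μ (Qc n \ Ms n) ≤ ∑ i ∈ Finset.range n, μ (D n i) :=
      (measure_mono (hincl n)).trans (measure_biUnion_finset_le _ _)
    have hstep3 : (μ (Qc n \ Ms n)).toReal ≤ ∑ i ∈ Finset.range n, (μ (D n i)).toReal := by
      rw [← ENNReal.toReal_sum (fun i _ => measure_ne_top μ _)]
      exact ENNReal.toReal_mono
        (ENNReal.sum_ne_top.mpr (fun i _ => measure_ne_top μ _)) hstep2
    refine hstep3.trans ?_
    have hstep4 : ∑ i ∈ Finset.range n, (μ (D n i)).toReal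
        = ∑ i ∈ Finset.range n, (μ (C n ((n - 1 - i) / p))).toReal :=
      Finset.sum_congr rfl (fun i _ => by rw [hstatD])
    rw [hstep4]
    have hstep5 : ∑ i ∈ Finset.range n, (μ (C n ((n - 1 - i) / p))).toReal
        = ∑ m ∈ Finset.range n, (μ (C n (m / p))).toReal :=
      Finset.sum_range_reflect (fun m => (μ (C n (m / p))).toReal) n
    rw [hstep5]
    have hnK : n ≤ K * p := by
      have h1 : (n - 1) / p < K := Nat.lt_succ_self _
      have h2 : n - 1 < K * p := (Nat.div_lt_iff_lt_mul hp).mp h1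
      omega
    have hstep6 : ∑ m ∈ Finset.range n, (μ (C n (m / p))).toReal ≤
        ∑ m ∈ Finset.range (K * p), (μ (C n (m / p))).toReal := by
      refine Finset.sum_le_sum_of_subset_of_nonneg
        (Finset.range_subset_range.mpr hnK) (fun m _ _ => ENNReal.toReal_nonneg)
    refine hstep6.trans ?_
    rw [haux n K]
  -- nonnegativity
  have hnonneg : ∀ n, 0 ≤ (μ (Qc n)).toReal - (μ (Ms n)).toReal := by
    intro n
    exact sub_nonneg.mpr (ENNReal.toReal_mono (measure_ne_top μ _)
      (measure_mono (hsub n)))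
  have htend : Tendsto (fun n => (p : ℝ) * ∑ i ∈ Finset.range ((n - 1) / p + 1),
      (μ (⋂ j ∈ Finset.range (i + 1), {ω | u n < X (j * p) ω})).toReal)
      atTop (nhds 0) := by
    have := hSP.const_mul (p : ℝ)
    simpa using this
  exact squeeze_zero hnonneg hbound htend
end

section
/- Let μ be an invariant probability measure for a system with decay of correlations: there are C > 0 and β > 0 such that for every set A of the form Q (a finite union of at most 2 intervals, with indicator of bounded variation ≤ 5), |μ(Q ∩ f^{-j}(Q)) − μ(Q)²| ≤ C' μ(Q) e^{-βj}. Suppose in addition that there exist B > 0 such that μ(Q ∩ f^{-j}(Q)) = 0 for all 1 ≤ j < B log n, and that n·μ(Q_n) → λ ≥ 0 for a sequence of sets Q_n, with Bβ > 1. Then for any sequence k_n → ∞ with k_n = o(n), n ∑_{j=1}^{[n/k_n]} μ(Q_n ∩ f^{-j}(Q_n)) → 0 as n → ∞. -/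
open MeasureTheory Finset Filter

/-! Every return term up to time `n / k_n` is at most `μ(Q_n)² + C' μ(Q_n) n^{-Bβ}`: below
`B log n` it vanishes, and from `B log n` on `e^{-βj} ≤ e^{-βB log n} = n^{-Bβ}`. Summing
`n / k_n` of them and multiplying by `n` gives `((nμ(Q_n))² + C' nμ(Q_n) n^{1-Bβ}) / k_n`,
whose numerator converges to `λ²` because `Bβ > 1`, while `k_n → ∞`. -/

theorem le_sq_add_mul_rpow_of_forall_lt_log_eq_zero {a : ℕ → ℝ} {m C' β B N : ℝ}
    (hm : 0 ≤ m) (hC' : 0 ≤ C') (hβ : 0 ≤ β) (hN : 0 < N)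
    (hshort : ∀ j : ℕ, 1 ≤ j → (j : ℝ) < B * Real.log N → a j = 0)
    (hdecay : ∀ j : ℕ, a j ≤ m ^ 2 + C' * m * Real.exp (-β * j)) {j : ℕ} (hj : 1 ≤ j) :
    a j ≤ m ^ 2 + C' * m * N ^ (-(B * β)) := by
  by_cases hjN : (j : ℝ) < B * Real.log N
  · rw [hshort j hj hjN]
    positivity
  · refine (hdecay j).trans ?_
    gcongr
    rw [Real.rpow_def_of_pos hN, Real.exp_le_exp]
    nlinarith

theorem sum_Icc_le_div_mul {a : ℕ → ℝ} {b : ℝ} (hb : 0 ≤ b) (n k : ℕ)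
    (h : ∀ j ∈ Icc 1 (n / k), a j ≤ b) :
    ∑ j ∈ Icc 1 (n / k), a j ≤ (n : ℝ) / k * b := by
  calc ∑ j ∈ Icc 1 (n / k), a j ≤ ((n / k : ℕ) : ℝ) * b := by
        simpa using sum_le_card_nsmul _ _ _ h
    _ ≤ (n : ℝ) / k * b := by gcongr; exact Nat.cast_div_le

theorem stmt13_general {X : Type*} [MeasurableSpace X] (μ : Measure X)
    (f : X → X) (Q : ℕ → Set X)
    (lam : ℝ)
    (hμQ : Tendsto (fun (n : ℕ) => (n : ℝ) * (μ (Q n)).toReal) atTop (nhds lam))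
    (C' β B : ℝ) (hC' : 0 < C') (hβ : 0 < β) (hBβ : 1 < B * β)
    (hshort : ∀ (n : ℕ) (j : ℕ), 1 ≤ j → (j : ℝ) < B * Real.log n →
      μ (Q n ∩ f^[j] ⁻¹' (Q n)) = 0)
    (hdecay : ∀ (n : ℕ) (j : ℕ),
      (μ (Q n ∩ f^[j] ⁻¹' (Q n))).toReal ≤
        (μ (Q n)).toReal ^ 2 + C' * (μ (Q n)).toReal * Real.exp (-β * j))
    (k : ℕ → ℕ) (hk : Tendsto k atTop atTop) :
    Tendsto (fun (n : ℕ) => (n : ℝ) *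
        ∑ j ∈ Finset.Icc 1 (n / k n), (μ (Q n ∩ f^[j] ⁻¹' (Q n))).toReal)
      atTop (nhds 0) := by
  have hpow : Tendsto (fun n : ℕ => (n : ℝ) ^ (1 - B * β)) atTop (nhds 0) := by
    have := (tendsto_rpow_neg_atTop (y := B * β - 1) (by linarith)).comp
      tendsto_natCast_atTop_atTop
    rwa [neg_sub] at this
  have hbound : Tendsto (fun n : ℕ => (((n : ℝ) * (μ (Q n)).toReal) ^ 2 +
      C' * ((n : ℝ) * (μ (Q n)).toReal) * (n : ℝ) ^ (1 - B * β)) / k n) atTop (nhds 0) :=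
    ((hμQ.pow 2).add ((hμQ.const_mul C').mul hpow)).div_atTop
      (tendsto_natCast_atTop_atTop.comp hk)
  refine squeeze_zero' (Eventually.of_forall fun n => by positivity) ?_ hbound
  filter_upwards [eventually_gt_atTop 0] with n hn
  have hn : (0 : ℝ) < n := Nat.cast_pos.mpr hn
  calc (n : ℝ) * ∑ j ∈ Icc 1 (n / k n), (μ (Q n ∩ f^[j] ⁻¹' (Q n))).toReal
      ≤ n * (n / k n * ((μ (Q n)).toReal ^ 2 + C' * (μ (Q n)).toReal * n ^ (-(B * β)))) := by
        gcongr
        refine sum_Icc_le_div_mul (by positivity) n (k n) fun j hj => ?_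
        exact le_sq_add_mul_rpow_of_forall_lt_log_eq_zero ENNReal.toReal_nonneg hC'.le hβ.le hn
          (fun j hj hjn => by rw [hshort n j hj hjn, ENNReal.toReal_zero]) (hdecay n)
          (mem_Icc.mp hj).1
    _ = _ := by
        rw [Real.rpow_sub hn, Real.rpow_one, Real.rpow_neg hn.le]
        ring

/-- Quantitative short-returns estimate: if `(Q_n)` satisfies `n·μ(Q_n) → λ ≥ 0`, there
are no returns before time `B log n`, and `μ(Q_n ∩ f^{-j}(Q_n)) ≤ μ(Q_n)² + C'μ(Q_n)e^{-βj}`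
with `Bβ > 1`, then for any `k_n → ∞` with `k_n = o(n)`,
`n ∑_{j=1}^{[n/k_n]} μ(Q_n ∩ f^{-j}(Q_n)) → 0`. -/
theorem stmt13 {X : Type*} [MeasurableSpace X] (μ : Measure X) [IsProbabilityMeasure μ]
    (f : X → X) (hf : Measurable f) (Q : ℕ → Set X) (hQ : ∀ n, MeasurableSet (Q n))
    (lam : ℝ) (hlam : 0 ≤ lam)
    (hμQ : Tendsto (fun (n : ℕ) => (n : ℝ) * (μ (Q n)).toReal) atTop (nhds lam))
    (C' β B : ℝ) (hC' : 0 < C') (hβ : 0 < β) (hB : 0 < B) (hBβ : 1 < B * β)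
    (hshort : ∀ (n : ℕ) (j : ℕ), 1 ≤ j → (j : ℝ) < B * Real.log n →
      μ (Q n ∩ f^[j] ⁻¹' (Q n)) = 0)
    (hdecay : ∀ (n : ℕ) (j : ℕ),
      (μ (Q n ∩ f^[j] ⁻¹' (Q n))).toReal ≤
        (μ (Q n)).toReal ^ 2 + C' * (μ (Q n)).toReal * Real.exp (-β * j))
    (k : ℕ → ℕ) (hk : Tendsto k atTop atTop)
    (hko : Tendsto (fun (n : ℕ) => (k n : ℝ) / n) atTop (nhds 0)) :
    Tendsto (fun (n : ℕ) => (n : ℝ) *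
        ∑ j ∈ Finset.Icc 1 (n / k n), (μ (Q n ∩ f^[j] ⁻¹' (Q n))).toReal)
      atTop (nhds 0) :=
  stmt13_general μ f Q lam hμQ C' β B hC' hβ hBβ hshort hdecay k hk
end
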